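/- Let A = ⊕_{n≥0} A_n be a graded bialgebra over a field and σ : A ⊗ A → k a normalized multiplicative 2-cocycle with σ|_{A₀⊗A₀} = ε ⊗ ε. Write σ = Σ_{i≥0} σ_i with σ_i the restriction of σ to the homogeneous component (A⊗A)_i = ⊕_{p+q=i} A_p ⊗ A_q (so σ₀ = ε⊗ε), and let s be the least positive integer with σ_s ≠ 0. Then σ_s is a Hochschild 2-cocycle with trivial coefficients: ε ⊗ σ_s + σ_s(id ⊗ m) = σ_s ⊗ ε + σ_s(m ⊗ id). -/

import Mathlib

/-!
Write `ρ = ε ⊗ ε + σ_s`. Because `ε` kills positive degrees and `m`, `Δ` respect the grading,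
`σ` and `ρ` agree on `(A ⊗ A)_{≤ s}`, so in degrees `≤ s` both sides of the cocycle identity may
be computed with `ρ` in place of `σ`. There `ε ⊗ ρ = ε₃ + ε ⊗ σ_s` and
`ρ (id ⊗ m) = ε₃ + σ_s (id ⊗ m)`, with `ε₃` the unit of the convolution algebra of `A ⊗ A ⊗ A`,
and the convolution of the two correction terms vanishes in degree `s`: the first vanishes below
degree `s`, the second in degree `0`. So the degree-`s` part of the cocycle identity is the
Hochschild identity for `σ_s`, and in every other degree all terms of the Hochschild identity
vanish.
-/

open TensorProduct

universe u

/-- The convolution product of two linear maps from a coalgebra `C` to an algebra `A`. -/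
noncomputable def convProd (K : Type u) [CommRing K] {C A : Type u}
    [AddCommMonoid C] [Module K C] [Coalgebra K C] [Ring A] [Algebra K A]
    (φ ψ : C →ₗ[K] A) : C →ₗ[K] A :=
  LinearMap.mul' K A ∘ₗ TensorProduct.map φ ψ ∘ₗ Coalgebra.comul

section TensorGrading

variable {K M N : Type*} [CommSemiring K] [AddCommMonoid M] [Module K M]
  [AddCommMonoid N] [Module K N]

def tensorGrading (𝒞 : ℕ → Submodule K M) (𝒟 : ℕ → Submodule K N) (n : ℕ) :
    Submodule K (M ⊗[K] N) :=
  ∑ p ∈ Finset.range (n + 1), LinearMap.range (mapIncl (𝒞 p) (𝒟 (n - p)))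

variable {𝒞 : ℕ → Submodule K M} {𝒟 : ℕ → Submodule K N}

theorem tmul_mem_tensorGrading {p q : ℕ} {x : M} {y : N} (hx : x ∈ 𝒞 p) (hy : y ∈ 𝒟 q) :
    x ⊗ₜ[K] y ∈ tensorGrading 𝒞 𝒟 (p + q) := by
  have hle : LinearMap.range (mapIncl (𝒞 p) (𝒟 (p + q - p))) ≤ tensorGrading 𝒞 𝒟 (p + q) :=
    Finset.single_le_sum (f := fun i => LinearMap.range (mapIncl (𝒞 i) (𝒟 (p + q - i))))
      (fun _ _ => zero_le) (Finset.mem_range.2 (by omega))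
  refine hle ?_
  rw [range_mapIncl, Nat.add_sub_cancel_left]
  exact Submodule.apply_mem_map₂ _ hx hy

theorem tensorGrading_le {n : ℕ} {S : Submodule K (M ⊗[K] N)}
    (h : ∀ p ≤ n, ∀ x ∈ 𝒞 p, ∀ y ∈ 𝒟 (n - p), x ⊗ₜ[K] y ∈ S) :
    tensorGrading 𝒞 𝒟 n ≤ S :=
  Finset.sum_induction _ (· ≤ S)
    (fun _ _ h₁ h₂ => (Submodule.add_eq_sup _ _).trans_le (sup_le h₁ h₂)) bot_le
    fun p hp => by
      rw [range_mapIncl]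
      exact Submodule.map₂_le.2 (h p (Nat.lt_succ_iff.1 (Finset.mem_range.1 hp)))

theorem tensorGrading_tensorGrading_le {P : Type*} [AddCommMonoid P] [Module K P]
    {ℰ : ℕ → Submodule K P} {n : ℕ} {S : Submodule K (M ⊗[K] (N ⊗[K] P))}
    (h : ∀ p q r, p + q + r = n → ∀ x ∈ 𝒞 p, ∀ y ∈ 𝒟 q, ∀ z ∈ ℰ r, x ⊗ₜ[K] (y ⊗ₜ[K] z) ∈ S) :
    tensorGrading 𝒞 (tensorGrading 𝒟 ℰ) n ≤ S :=
  tensorGrading_le fun p hp x hx _ hyz =>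
    tensorGrading_le (S := S.comap (TensorProduct.mk K M _ x))
      (fun q hq y hy z hz => h p q _ (by omega) x hx y hy z hz) hyz

theorem eqOn_tensorGrading_tensorGrading {P Q : Type*} [AddCommMonoid P] [Module K P]
    [AddCommMonoid Q] [Module K Q] {ℰ : ℕ → Submodule K P} {n : ℕ}
    {f g : M ⊗[K] (N ⊗[K] P) →ₗ[K] Q}
    (h : ∀ p q r, p + q + r = n → ∀ x ∈ 𝒞 p, ∀ y ∈ 𝒟 q, ∀ z ∈ ℰ r,
      f (x ⊗ₜ[K] (y ⊗ₜ[K] z)) = g (x ⊗ₜ[K] (y ⊗ₜ[K] z))) :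
    Set.EqOn f g (tensorGrading 𝒞 (tensorGrading 𝒟 ℰ) n) := fun _ hw =>
  tensorGrading_tensorGrading_le (S := LinearMap.eqLocus f g) h hw

theorem iSup_tensorGrading_eq_top (h𝒞 : ⨆ i, 𝒞 i = ⊤) (h𝒟 : ⨆ i, 𝒟 i = ⊤) :
    ⨆ n, tensorGrading 𝒞 𝒟 n = ⊤ := by
  set S := ⨆ n, tensorGrading 𝒞 𝒟 n
  have hhom : ∀ i j, ∀ x ∈ 𝒞 i, ∀ y ∈ 𝒟 j, x ⊗ₜ[K] y ∈ S := fun i j x hx y hy =>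
    Submodule.mem_iSup_of_mem (i + j) (tmul_mem_tensorGrading hx hy)
  have hleft : ∀ j, ∀ y ∈ 𝒟 j, ∀ x : M, x ⊗ₜ[K] y ∈ S := fun j y hy x => by
    have : ⨆ i, 𝒞 i ≤ S.comap ((TensorProduct.mk K M N).flip y) :=
      iSup_le fun i x hx => hhom i j x hx y hy
    exact this (h𝒞 ▸ Submodule.mem_top)
  have htmul : ∀ (x : M) (y : N), x ⊗ₜ[K] y ∈ S := fun x y => by
    have : ⨆ j, 𝒟 j ≤ S.comap (TensorProduct.mk K M N x) :=
      iSup_le fun j y hy => hleft j y hy x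
    exact this (h𝒟 ▸ Submodule.mem_top)
  rw [eq_top_iff, ← span_tmul_eq_top, Submodule.span_le]
  rintro _ ⟨x, y, rfl⟩
  exact htmul x y

end TensorGrading

section GradedCoalgebra

variable {K C D : Type*} [CommSemiring K] [AddCommMonoid C] [Module K C]
  [AddCommMonoid D] [Module K D]

def IsGradedComul [CoalgebraStruct K C] (𝒞 : ℕ → Submodule K C) : Prop :=
  ∀ n, 𝒞 n ≤ (tensorGrading 𝒞 𝒞 n).comap (Coalgebra.comul (R := K))

theorem tensorTensorTensorComm_mem_tensorGrading {𝒞 : ℕ → Submodule K C}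
    {𝒟 : ℕ → Submodule K D} {p q : ℕ} {u : C ⊗[K] C} {v : D ⊗[K] D}
    (hu : u ∈ tensorGrading 𝒞 𝒞 p) (hv : v ∈ tensorGrading 𝒟 𝒟 q) :
    tensorTensorTensorComm K C C D D (u ⊗ₜ[K] v) ∈
      tensorGrading (tensorGrading 𝒞 𝒟) (tensorGrading 𝒞 𝒟) (p + q) := by
  refine tensorGrading_le (S := Submodule.comap ((tensorTensorTensorComm K C C D D).toLinearMap ∘ₗ
    (TensorProduct.mk K _ _).flip v) _) (fun i hi x₁ hx₁ x₂ hx₂ => ?_) hu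
  refine tensorGrading_le (S := Submodule.comap ((tensorTensorTensorComm K C C D D).toLinearMap ∘ₗ
    TensorProduct.mk K _ _ (x₁ ⊗ₜ x₂)) _) (fun j hj y₁ hy₁ y₂ hy₂ => ?_) hv
  have hdeg : i + j + (p - i + (q - j)) = p + q := by omega
  simpa [hdeg] using tmul_mem_tensorGrading (tmul_mem_tensorGrading hx₁ hy₁)
    (tmul_mem_tensorGrading hx₂ hy₂)

theorem IsGradedComul.tensor [Coalgebra K C] [Coalgebra K D] {𝒞 : ℕ → Submodule K C}
    {𝒟 : ℕ → Submodule K D} (h𝒞 : IsGradedComul 𝒞) (h𝒟 : IsGradedComul 𝒟) :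
    IsGradedComul (tensorGrading 𝒞 𝒟) := fun n =>
  tensorGrading_le fun p hp x hx y hy => by
    rw [Submodule.mem_comap, comul_tmul, ← Nat.add_sub_cancel' hp]
    exact tensorTensorTensorComm_mem_tensorGrading (h𝒞 p hx) (h𝒟 _ hy)

end GradedCoalgebra

section Convolution

variable {K C : Type u} [CommRing K] [AddCommMonoid C] [Module K C] [Coalgebra K C]
  {𝒞 : ℕ → Submodule K C}

theorem convProd_apply_eq_of_mul_eq {B : Type u} [Ring B] [Algebra K B] (h𝒞 : IsGradedComul 𝒞)
    {φ ψ φ' ψ' : C →ₗ[K] B} {n : ℕ}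
    (h : ∀ p ≤ n, ∀ y ∈ 𝒞 p, ∀ z ∈ 𝒞 (n - p), φ y * ψ z = φ' y * ψ' z)
    {x : C} (hx : x ∈ 𝒞 n) : convProd K φ ψ x = convProd K φ' ψ' x :=
  tensorGrading_le (S := LinearMap.eqLocus (LinearMap.mul' K B ∘ₗ map φ ψ)
    (LinearMap.mul' K B ∘ₗ map φ' ψ')) (fun p hp y hy z hz => by simpa using h p hp y hy z hz)
    (h𝒞 n hx)

theorem convProd_counit_add_counit_add (X Y : C →ₗ[K] K) :
    convProd K (Coalgebra.counit + X) (Coalgebra.counit + Y) =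
      Coalgebra.counit + X + Y + convProd K X Y := by
  have hone : WithConv.toConv (Coalgebra.counit : C →ₗ[K] K) = 1 := by ext; simp
  change WithConv.ofConv (WithConv.toConv _ * WithConv.toConv _) =
    WithConv.ofConv (WithConv.toConv _ + _ + _ + WithConv.toConv X * WithConv.toConv Y)
  simp only [WithConv.toConv_add, hone]
  noncomm_ring

theorem convProd_apply_eq_counit_add_add (h𝒞 : IsGradedComul 𝒞) {s : ℕ}
    {Φ Ψ X Y : C →ₗ[K] K}
    (hΦ : ∀ p ≤ s, Set.EqOn Φ (Coalgebra.counit + X : C →ₗ[K] K) (𝒞 p))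
    (hΨ : ∀ p ≤ s, Set.EqOn Ψ (Coalgebra.counit + Y : C →ₗ[K] K) (𝒞 p))
    (hX : ∀ p < s, ∀ y ∈ 𝒞 p, X y = 0) (hY : ∀ y ∈ 𝒞 0, Y y = 0)
    {x : C} (hx : x ∈ 𝒞 s) :
    convProd K Φ Ψ x = Coalgebra.counit x + X x + Y x := by
  have hXY : convProd K X Y x = 0 :=
    (convProd_apply_eq_of_mul_eq (φ' := 0) (ψ' := 0) h𝒞 (fun p hp y hy z hz => by
      rcases hp.lt_or_eq with hp | rfl
      · simp [hX p hp y hy]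
      · simp [hY z (by simpa using hz)]) hx).trans (by simp [convProd])
  calc convProd K Φ Ψ x
      = convProd K (Coalgebra.counit + X) (Coalgebra.counit + Y) x :=
        convProd_apply_eq_of_mul_eq h𝒞 (fun p hp y hy z hz => by
          rw [hΦ p hp hy, hΨ _ (Nat.sub_le s p) hz]) hx
    _ = Coalgebra.counit x + X x + Y x := by
        rw [convProd_counit_add_counit_add, LinearMap.add_apply, hXY, add_zero]
        rfl

end Convolution

section TwoCocycle

variable {K A : Type u} [CommRing K] [Ring A] [Bialgebra K A]

def counitTensor (f : A ⊗[K] A →ₗ[K] K) : A ⊗[K] (A ⊗[K] A) →ₗ[K] K :=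
  LinearMap.mul' K K ∘ₗ map (Coalgebra.counit (R := K) (A := A)) f

def tensorCounit (f : A ⊗[K] A →ₗ[K] K) : A ⊗[K] (A ⊗[K] A) →ₗ[K] K :=
  (LinearMap.mul' K K ∘ₗ map f (Coalgebra.counit (R := K) (A := A))) ∘ₗ
    (TensorProduct.assoc K A A A).symm.toLinearMap

def compMulRight (f : A ⊗[K] A →ₗ[K] K) : A ⊗[K] (A ⊗[K] A) →ₗ[K] K :=
  f ∘ₗ map LinearMap.id (LinearMap.mul' K A)

def compMulLeft (f : A ⊗[K] A →ₗ[K] K) : A ⊗[K] (A ⊗[K] A) →ₗ[K] K :=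
  (f ∘ₗ map (LinearMap.mul' K A) LinearMap.id) ∘ₗ (TensorProduct.assoc K A A A).symm.toLinearMap

@[simp] theorem counitTensor_tmul (f : A ⊗[K] A →ₗ[K] K) (a b c : A) :
    counitTensor f (a ⊗ₜ[K] (b ⊗ₜ[K] c)) = Coalgebra.counit a * f (b ⊗ₜ[K] c) := by
  simp [counitTensor]

@[simp] theorem tensorCounit_tmul (f : A ⊗[K] A →ₗ[K] K) (a b c : A) :
    tensorCounit f (a ⊗ₜ[K] (b ⊗ₜ[K] c)) = f (a ⊗ₜ[K] b) * Coalgebra.counit c := by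
  simp [tensorCounit]

@[simp] theorem compMulRight_tmul (f : A ⊗[K] A →ₗ[K] K) (a b c : A) :
    compMulRight f (a ⊗ₜ[K] (b ⊗ₜ[K] c)) = f (a ⊗ₜ[K] (b * c)) := by
  simp [compMulRight]

@[simp] theorem compMulLeft_tmul (f : A ⊗[K] A →ₗ[K] K) (a b c : A) :
    compMulLeft f (a ⊗ₜ[K] (b ⊗ₜ[K] c)) = f ((a * b) ⊗ₜ[K] c) := by
  simp [compMulLeft]

def IsTwoCocycle (σ : A ⊗[K] A →ₗ[K] K) : Prop :=
  convProd K (counitTensor σ) (compMulRight σ) = convProd K (tensorCounit σ) (compMulLeft σ)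

def IsHochschildTwoCocycle (τ : A ⊗[K] A →ₗ[K] K) : Prop :=
  counitTensor τ + compMulRight τ = tensorCounit τ + compMulLeft τ

variable {𝒜 : ℕ → Submodule K A} {s : ℕ}

section Vanishing

variable {τ : A ⊗[K] A →ₗ[K] K}

theorem le_ker_counitTensor (hcounit : ∀ n > 0, ∀ x ∈ 𝒜 n, Coalgebra.counit (R := K) x = 0)
    (hτ : ∀ p q, p + q ≠ s → ∀ x ∈ 𝒜 p, ∀ y ∈ 𝒜 q, τ (x ⊗ₜ[K] y) = 0) {n : ℕ} (hn : n ≠ s) :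
    tensorGrading 𝒜 (tensorGrading 𝒜 𝒜) n ≤ LinearMap.ker (counitTensor τ) :=
  tensorGrading_tensorGrading_le fun p q r hpqr a ha b hb c hc => by
    rcases Nat.eq_zero_or_pos p with rfl | hp
    · simp [hτ q r (by omega) b hb c hc]
    · simp [hcounit p hp a ha]

theorem le_ker_tensorCounit (hcounit : ∀ n > 0, ∀ x ∈ 𝒜 n, Coalgebra.counit (R := K) x = 0)
    (hτ : ∀ p q, p + q ≠ s → ∀ x ∈ 𝒜 p, ∀ y ∈ 𝒜 q, τ (x ⊗ₜ[K] y) = 0) {n : ℕ} (hn : n ≠ s) :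
    tensorGrading 𝒜 (tensorGrading 𝒜 𝒜) n ≤ LinearMap.ker (tensorCounit τ) :=
  tensorGrading_tensorGrading_le fun p q r hpqr a ha b hb c hc => by
    rcases Nat.eq_zero_or_pos r with rfl | hr
    · simp [hτ p q (by omega) a ha b hb]
    · simp [hcounit r hr c hc]

theorem le_ker_compMulRight [GradedAlgebra 𝒜]
    (hτ : ∀ p q, p + q ≠ s → ∀ x ∈ 𝒜 p, ∀ y ∈ 𝒜 q, τ (x ⊗ₜ[K] y) = 0) {n : ℕ} (hn : n ≠ s) :
    tensorGrading 𝒜 (tensorGrading 𝒜 𝒜) n ≤ LinearMap.ker (compMulRight τ) :=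
  tensorGrading_tensorGrading_le fun p q r hpqr a ha b hb c hc => by
    simp [hτ p (q + r) (by omega) a ha _ (SetLike.mul_mem_graded hb hc)]

theorem le_ker_compMulLeft [GradedAlgebra 𝒜]
    (hτ : ∀ p q, p + q ≠ s → ∀ x ∈ 𝒜 p, ∀ y ∈ 𝒜 q, τ (x ⊗ₜ[K] y) = 0) {n : ℕ} (hn : n ≠ s) :
    tensorGrading 𝒜 (tensorGrading 𝒜 𝒜) n ≤ LinearMap.ker (compMulLeft τ) :=
  tensorGrading_tensorGrading_le fun p q r hpqr a ha b hb c hc => by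
    simp [hτ (p + q) r (by omega) _ (SetLike.mul_mem_graded ha hb) c hc]

end Vanishing

section LowDegree

variable {σ τ : A ⊗[K] A →ₗ[K] K} {p : ℕ}

theorem eqOn_counitTensor
    (hστ : ∀ p q, p + q ≤ s → ∀ x ∈ 𝒜 p, ∀ y ∈ 𝒜 q,
      σ (x ⊗ₜ[K] y) = Coalgebra.counit (R := K) x * Coalgebra.counit y + τ (x ⊗ₜ[K] y))
    (hp : p ≤ s) :
    Set.EqOn (counitTensor σ) (Coalgebra.counit + counitTensor τ : A ⊗[K] (A ⊗[K] A) →ₗ[K] K)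
      (tensorGrading 𝒜 (tensorGrading 𝒜 𝒜) p) :=
  eqOn_tensorGrading_tensorGrading fun q r t hqrt a ha b hb c hc => by
    simp [hστ r t (by omega) b hb c hc, mul_add]; ring

theorem eqOn_tensorCounit
    (hστ : ∀ p q, p + q ≤ s → ∀ x ∈ 𝒜 p, ∀ y ∈ 𝒜 q,
      σ (x ⊗ₜ[K] y) = Coalgebra.counit (R := K) x * Coalgebra.counit y + τ (x ⊗ₜ[K] y))
    (hp : p ≤ s) :
    Set.EqOn (tensorCounit σ) (Coalgebra.counit + tensorCounit τ : A ⊗[K] (A ⊗[K] A) →ₗ[K] K)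
      (tensorGrading 𝒜 (tensorGrading 𝒜 𝒜) p) :=
  eqOn_tensorGrading_tensorGrading fun q r t hqrt a ha b hb c hc => by
    simp [hστ q r (by omega) a ha b hb, add_mul]; ring

theorem eqOn_compMulRight [GradedAlgebra 𝒜]
    (hστ : ∀ p q, p + q ≤ s → ∀ x ∈ 𝒜 p, ∀ y ∈ 𝒜 q,
      σ (x ⊗ₜ[K] y) = Coalgebra.counit (R := K) x * Coalgebra.counit y + τ (x ⊗ₜ[K] y))
    (hp : p ≤ s) :
    Set.EqOn (compMulRight σ) (Coalgebra.counit + compMulRight τ : A ⊗[K] (A ⊗[K] A) →ₗ[K] K)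
      (tensorGrading 𝒜 (tensorGrading 𝒜 𝒜) p) :=
  eqOn_tensorGrading_tensorGrading fun q r t hqrt a ha b hb c hc => by
    simp [hστ q (r + t) (by omega) a ha _ (SetLike.mul_mem_graded hb hc)]; ring

theorem eqOn_compMulLeft [GradedAlgebra 𝒜]
    (hστ : ∀ p q, p + q ≤ s → ∀ x ∈ 𝒜 p, ∀ y ∈ 𝒜 q,
      σ (x ⊗ₜ[K] y) = Coalgebra.counit (R := K) x * Coalgebra.counit y + τ (x ⊗ₜ[K] y))
    (hp : p ≤ s) :
    Set.EqOn (compMulLeft σ) (Coalgebra.counit + compMulLeft τ : A ⊗[K] (A ⊗[K] A) →ₗ[K] K)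
      (tensorGrading 𝒜 (tensorGrading 𝒜 𝒜) p) :=
  eqOn_tensorGrading_tensorGrading fun q r t hqrt a ha b hb c hc => by
    simp [hστ (q + r) t (by omega) _ (SetLike.mul_mem_graded ha hb) c hc]; ring

end LowDegree

theorem IsTwoCocycle.isHochschildTwoCocycle [GradedAlgebra 𝒜] (hΔ : IsGradedComul 𝒜)
    (hcounit : ∀ n > 0, ∀ x ∈ 𝒜 n, Coalgebra.counit (R := K) x = 0)
    {σ τ : A ⊗[K] A →ₗ[K] K} (hσ : IsTwoCocycle σ) (hs : 0 < s)
    (hτ : ∀ p q, p + q ≠ s → ∀ x ∈ 𝒜 p, ∀ y ∈ 𝒜 q, τ (x ⊗ₜ[K] y) = 0)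
    (hστ : ∀ p q, p + q ≤ s → ∀ x ∈ 𝒜 p, ∀ y ∈ 𝒜 q,
      σ (x ⊗ₜ[K] y) = Coalgebra.counit (R := K) x * Coalgebra.counit y + τ (x ⊗ₜ[K] y)) :
    IsHochschildTwoCocycle τ := by
  have h𝒯 : IsGradedComul (tensorGrading 𝒜 (tensorGrading 𝒜 𝒜)) := hΔ.tensor (hΔ.tensor hΔ)
  have h𝒜 : ⨆ i, 𝒜 i = ⊤ := (DirectSum.Decomposition.isInternal 𝒜).submodule_iSup_eq_top
  rw [IsHochschildTwoCocycle, ← LinearMap.eqLocus_eq_top, eq_top_iff,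
    ← iSup_tensorGrading_eq_top h𝒜 (iSup_tensorGrading_eq_top h𝒜 h𝒜), iSup_le_iff]
  intro n x hx
  rcases eq_or_ne n s with rfl | hn
  · have hleft := convProd_apply_eq_counit_add_add h𝒯 (fun p hp => eqOn_counitTensor hστ hp)
      (fun p hp => eqOn_compMulRight hστ hp)
      (fun p hp y hy => le_ker_counitTensor hcounit hτ hp.ne hy)
      (fun y hy => le_ker_compMulRight hτ hs.ne hy) hx
    have hright := convProd_apply_eq_counit_add_add h𝒯 (fun p hp => eqOn_tensorCounit hστ hp)
      (fun p hp => eqOn_compMulLeft hστ hp)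
      (fun p hp y hy => le_ker_tensorCounit hcounit hτ hp.ne hy)
      (fun y hy => le_ker_compMulLeft hτ hs.ne hy) hx
    have hcoc := LinearMap.congr_fun hσ x
    rw [hleft, hright] at hcoc
    simp only [LinearMap.mem_eqLocus, LinearMap.add_apply]
    linear_combination hcoc
  · simp [LinearMap.mem_ker.1 (le_ker_counitTensor hcounit hτ hn hx),
      LinearMap.mem_ker.1 (le_ker_compMulRight hτ hn hx),
      LinearMap.mem_ker.1 (le_ker_tensorCounit hcounit hτ hn hx),
      LinearMap.mem_ker.1 (le_ker_compMulLeft hτ hn hx)]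

end TwoCocycle

theorem apply_tmul_eq_counit_mul_counit_add {K A : Type u} [CommRing K] [Ring A] [Bialgebra K A]
    {𝒜 : ℕ → Submodule K A}
    (hcounit : ∀ n > 0, ∀ x ∈ 𝒜 n, Coalgebra.counit (R := K) x = 0)
    {σ : A ⊗[K] A →ₗ[K] K}
    (hσ0 : ∀ x ∈ 𝒜 0, ∀ y ∈ 𝒜 0,
      σ (x ⊗ₜ[K] y) = Coalgebra.counit (R := K) x * Coalgebra.counit (R := K) y)
    {σi : ℕ → ((A ⊗[K] A) →ₗ[K] K)}
    (hσi : ∀ i p q : ℕ, ∀ x ∈ 𝒜 p, ∀ y ∈ 𝒜 q,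
      σi i (x ⊗ₜ[K] y) = if p + q = i then σ (x ⊗ₜ[K] y) else 0)
    {s : ℕ} (hs : 0 < s) (hmin : ∀ i, 0 < i → i < s → σi i = 0)
    {p q : ℕ} (hpq : p + q ≤ s) {x y : A} (hx : x ∈ 𝒜 p) (hy : y ∈ 𝒜 q) :
    σ (x ⊗ₜ[K] y) = Coalgebra.counit (R := K) x * Coalgebra.counit y + σi s (x ⊗ₜ[K] y) := by
  rw [hσi s p q x hx y hy]
  rcases Nat.eq_zero_or_pos (p + q) with hzero | hpos
  · obtain ⟨rfl, rfl⟩ := Nat.add_eq_zero_iff.1 hzero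
    simp [hσ0 x hx y hy, hs.ne]
  have hεε : Coalgebra.counit (R := K) x * Coalgebra.counit y = 0 := by
    rcases Nat.eq_zero_or_pos p with rfl | hp
    · simp [hcounit q (by omega) y hy]
    · simp [hcounit p hp x hx]
  rw [hεε, zero_add]
  rcases hpq.lt_or_eq with hlt | rfl
  · have hσ : σi (p + q) (x ⊗ₜ[K] y) = σ (x ⊗ₜ[K] y) := by
      rw [hσi _ p q x hx y hy, if_pos rfl]
    simp [← hσ, hmin _ hpos hlt, hlt.ne]
  · simp

theorem graded_infinitesimal_is_hochschild_cocycle_general (K A : Type u) [Field K] [Ring A]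
    [Bialgebra K A] (𝒜 : ℕ → Submodule K A) [GradedAlgebra 𝒜]
    (hΔ : ∀ n, ∀ x ∈ 𝒜 n, Coalgebra.comul (R := K) x ∈
      ∑ p ∈ Finset.range (n + 1),
        LinearMap.range (TensorProduct.mapIncl (𝒜 p) (𝒜 (n - p))))
    (hcounit : ∀ n > 0, ∀ x ∈ 𝒜 n, Coalgebra.counit (R := K) x = 0)
    (σ : (A ⊗[K] A) →ₗ[K] K)
    (hσ0 : ∀ x ∈ 𝒜 0, ∀ y ∈ 𝒜 0,
      σ (x ⊗ₜ[K] y) = Coalgebra.counit (R := K) x * Coalgebra.counit (R := K) y)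
    (hcoc :
      convProd K
        ((LinearMap.mul' K K) ∘ₗ TensorProduct.map (Coalgebra.counit (R := K) (A := A)) σ)
        (σ ∘ₗ TensorProduct.map (LinearMap.id (M := A)) (LinearMap.mul' K A))
      = convProd K
        (((LinearMap.mul' K K) ∘ₗ
            TensorProduct.map σ (Coalgebra.counit (R := K) (A := A))) ∘ₗ
          (TensorProduct.assoc K A A A).symm.toLinearMap)
        ((σ ∘ₗ TensorProduct.map (LinearMap.mul' K A) (LinearMap.id (M := A))) ∘ₗ
          (TensorProduct.assoc K A A A).symm.toLinearMap))
    (σi : ℕ → ((A ⊗[K] A) →ₗ[K] K))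
    (hσi : ∀ i p q : ℕ, ∀ x ∈ 𝒜 p, ∀ y ∈ 𝒜 q,
      σi i (x ⊗ₜ[K] y) = if p + q = i then σ (x ⊗ₜ[K] y) else 0)
    (s : ℕ) (hs : 0 < s) (hmin : ∀ i, 0 < i → i < s → σi i = 0) :
    ∀ a b c : A,
      Coalgebra.counit (R := K) a * σi s (b ⊗ₜ[K] c) + σi s (a ⊗ₜ[K] (b * c))
        = σi s (a ⊗ₜ[K] b) * Coalgebra.counit (R := K) c + σi s ((a * b) ⊗ₜ[K] c) := by
  have hτ : ∀ p q, p + q ≠ s → ∀ x ∈ 𝒜 p, ∀ y ∈ 𝒜 q, σi s (x ⊗ₜ[K] y) = 0 :=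
    fun p q hpq x hx y hy => by rw [hσi s p q x hx y hy, if_neg hpq]
  have hHoch : IsHochschildTwoCocycle (σi s) :=
    IsTwoCocycle.isHochschildTwoCocycle hΔ hcounit hcoc hs hτ
      fun _ _ hpq _ hx _ hy =>
        apply_tmul_eq_counit_mul_counit_add hcounit hσ0 hσi hs hmin hpq hx hy
  intro a b c
  simpa using LinearMap.congr_fun hHoch (a ⊗ₜ[K] (b ⊗ₜ[K] c))

/-- Let `A = ⊕_{n≥0} A_n` be a graded bialgebra over a field and `σ : A ⊗ A → K` a
normalized multiplicative 2-cocycle with `σ|_{A₀⊗A₀} = ε ⊗ ε`. Write `σ = Σ_i σ_i` with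
`σ_i` the restriction of `σ` to the homogeneous component `(A⊗A)_i = ⊕_{p+q=i} A_p ⊗ A_q`,
and let `s` be the least positive integer with `σ_s ≠ 0`. Then `σ_s` is a Hochschild
2-cocycle with trivial coefficients:
`ε(a) σ_s(b,c) + σ_s(a, bc) = σ_s(a,b) ε(c) + σ_s(ab, c)`. -/
theorem graded_infinitesimal_is_hochschild_cocycle (K A : Type u) [Field K] [Ring A]
    [Bialgebra K A] (𝒜 : ℕ → Submodule K A) [GradedAlgebra 𝒜]
    (hΔ : ∀ n, ∀ x ∈ 𝒜 n, Coalgebra.comul (R := K) x ∈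
      ∑ p ∈ Finset.range (n + 1),
        LinearMap.range (TensorProduct.mapIncl (𝒜 p) (𝒜 (n - p))))
    (hcounit : ∀ n > 0, ∀ x ∈ 𝒜 n, Coalgebra.counit (R := K) x = 0)
    (σ : (A ⊗[K] A) →ₗ[K] K)
    (hσ0 : ∀ x ∈ 𝒜 0, ∀ y ∈ 𝒜 0,
      σ (x ⊗ₜ[K] y) = Coalgebra.counit (R := K) x * Coalgebra.counit (R := K) y)
    (hinv : ∃ τ : (A ⊗[K] A) →ₗ[K] K,
      convProd K σ τ = Coalgebra.counit ∧ convProd K τ σ = Coalgebra.counit)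
    (hnorm : ∀ a : A, σ (a ⊗ₜ[K] 1) = Coalgebra.counit (R := K) a ∧
      σ ((1 : A) ⊗ₜ[K] a) = Coalgebra.counit (R := K) a)
    (hcoc :
      convProd K
        ((LinearMap.mul' K K) ∘ₗ TensorProduct.map (Coalgebra.counit (R := K) (A := A)) σ)
        (σ ∘ₗ TensorProduct.map (LinearMap.id (M := A)) (LinearMap.mul' K A))
      = convProd K
        (((LinearMap.mul' K K) ∘ₗ
            TensorProduct.map σ (Coalgebra.counit (R := K) (A := A))) ∘ₗ
          (TensorProduct.assoc K A A A).symm.toLinearMap)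
        ((σ ∘ₗ TensorProduct.map (LinearMap.mul' K A) (LinearMap.id (M := A))) ∘ₗ
          (TensorProduct.assoc K A A A).symm.toLinearMap))
    (σi : ℕ → ((A ⊗[K] A) →ₗ[K] K))
    (hσi : ∀ i p q : ℕ, ∀ x ∈ 𝒜 p, ∀ y ∈ 𝒜 q,
      σi i (x ⊗ₜ[K] y) = if p + q = i then σ (x ⊗ₜ[K] y) else 0)
    (s : ℕ) (hs : 0 < s) (hss : σi s ≠ 0) (hmin : ∀ i, 0 < i → i < s → σi i = 0) :
    ∀ a b c : A,
      Coalgebra.counit (R := K) a * σi s (b ⊗ₜ[K] c) + σi s (a ⊗ₜ[K] (b * c))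
        = σi s (a ⊗ₜ[K] b) * Coalgebra.counit (R := K) c + σi s ((a * b) ⊗ₜ[K] c) :=
  graded_infinitesimal_is_hochschild_cocycle_general K A 𝒜 hΔ hcounit σ hσ0 hcoc σi hσi s hs hmin
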